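/- For self-adjoint operators A₁, A₂ on ℂ^d and k ∈ [d], the sum of the k largest eigenvalues of A₁ + A₂ is at most the optimal value of the linear program maximizing (λ(A₁) ⊕ λ(A₂))ᵀ x subject to: 0 ≤ x^{(1)}_i, x^{(2)}_i ≤ 1 for all i, Σ_i x^{(1)}_i = Σ_i x^{(2)}_i = k, and Σ_{i≤ℓ₁} x^{(1)}_i + Σ_{i≤ℓ₂} x^{(2)}_i ≤ s_k(P_{↓ℓ₁}(A₁) + P_{↓ℓ₂}(A₂)) for all ℓ₁, ℓ₂ ∈ [d]. -/

import Mathlib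

open Matrix

/-- Sum of the `k` largest values of `f` (as the sup of sums over `k`-subsets). -/
noncomputable def sk {ι : Type*} [Fintype ι] (f : ι → ℝ) (k : ℕ) : ℝ :=
  sSup {x | ∃ S : Finset ι, S.card = k ∧ x = ∑ i ∈ S, f i}

/-- Projector onto the span of the first `ℓ` of the vectors `v i`. -/
noncomputable def proj {d : ℕ} (v : Fin d → Fin d → ℂ) (ℓ : ℕ) : Matrix (Fin d) (Fin d) ℂ :=
  ∑ i ∈ Finset.univ.filter (fun i : Fin d => (i : ℕ) < ℓ),
    Matrix.vecMulVec (v i) (star (v i))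

/-! Let `u` be an orthonormal eigenbasis of `A₁ + A₂` and `S` the indices of its `k` largest
eigenvalues, so that `W = span {u s | s ∈ S}` is optimal in Ky Fan's maximum principle. The
witness is `x⁽ᵃ⁾ᵢ = tr(P_W Π_i(A_a))` (`projWeight`). By Parseval these weights lie in `[0, 1]`
and sum to `k`, and the objective equals `tr(P_W (A₁ + A₂)) = s_k(A₁ + A₂)`. The left side of an
alignment constraint is `tr(P_W M)` for `M = P_{↓ℓ₁}(A₁) + P_{↓ℓ₂}(A₂)`; in an eigenbasis of `M`
this is `∑ⱼ λⱼ(M) tⱼ` with `0 ≤ tⱼ ≤ 1` and `∑ⱼ tⱼ = k`, and such a fractional choice of `k`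
eigenvalues never beats the `k` largest ones. -/

open Finset

section TopSums

variable {ι : Type*} [Fintype ι]

lemma finite_setOf_sum_of_card_eq (f : ι → ℝ) (k : ℕ) :
    {x | ∃ S : Finset ι, S.card = k ∧ x = ∑ i ∈ S, f i}.Finite := by
  refine (Set.finite_range fun S : Finset ι => ∑ i ∈ S, f i).subset ?_
  rintro _ ⟨S, -, rfl⟩
  exact ⟨S, rfl⟩

lemma sum_le_sk (f : ι → ℝ) {k : ℕ} {T : Finset ι} (hT : T.card = k) :
    ∑ i ∈ T, f i ≤ sk f k :=
  le_csSup (finite_setOf_sum_of_card_eq f k).bddAbove ⟨T, hT, rfl⟩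

lemma exists_sum_eq_sk (f : ι → ℝ) {k : ℕ} (hk : k ≤ Fintype.card ι) :
    ∃ S : Finset ι, S.card = k ∧ ∑ i ∈ S, f i = sk f k := by
  obtain ⟨S₀, -, hS₀⟩ := exists_subset_card_eq (s := (univ : Finset ι)) hk
  have hne : {x | ∃ S : Finset ι, S.card = k ∧ x = ∑ i ∈ S, f i}.Nonempty := ⟨_, S₀, hS₀, rfl⟩
  obtain ⟨S, hS, hsum⟩ := hne.csSup_mem (finite_setOf_sum_of_card_eq f k)
  exact ⟨S, hS, hsum.symm⟩

lemma exists_threshold_of_sum_eq_sk (f : ι → ℝ) {S : Finset ι}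
    (hS : ∑ i ∈ S, f i = sk f S.card) :
    ∃ c, (∀ i ∈ S, c ≤ f i) ∧ ∀ j ∉ S, f j ≤ c := by
  classical
  by_cases hne : S.Nonempty
  · refine ⟨S.inf' hne f, fun i hi => inf'_le f hi, fun j hj => ?_⟩
    refine (le_inf'_iff hne f).2 fun i hi => ?_
    have hswap := sum_le_sk f (T := insert j (S.erase i)) (by
      rw [card_insert_of_notMem fun h => hj (mem_of_mem_erase h), card_erase_add_one hi])
    rw [sum_insert fun h => hj (mem_of_mem_erase h), ← hS, ← add_sum_erase S f hi] at hswap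
    linarith
  · obtain ⟨c, hc⟩ := (Set.finite_range f).bddAbove
    rw [not_nonempty_iff_eq_empty] at hne
    exact ⟨c, by simp [hne], fun j _ => hc ⟨j, rfl⟩⟩

lemma sum_mul_le_sum_of_threshold (f t : ι → ℝ) {S : Finset ι} {c : ℝ}
    (hS : ∀ i ∈ S, c ≤ f i) (hSc : ∀ j ∉ S, f j ≤ c) (ht0 : ∀ i, 0 ≤ t i) (ht1 : ∀ i, t i ≤ 1)
    (ht : ∑ i, t i = S.card) :
    ∑ i, f i * t i ≤ ∑ i ∈ S, f i := by
  classical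
  have hgap : ∀ i, 0 ≤ (f i - c) * ((if i ∈ S then 1 else 0) - t i) := by
    intro i
    split_ifs with hi
    · exact mul_nonneg (sub_nonneg.2 (hS i hi)) (sub_nonneg.2 (ht1 i))
    · exact mul_nonneg_of_nonpos_of_nonpos (sub_nonpos.2 (hSc i hi)) (by linarith [ht0 i])
  calc ∑ i, f i * t i ≤ ∑ i, (f i * t i + (f i - c) * ((if i ∈ S then 1 else 0) - t i)) :=
        sum_le_sum fun i _ => le_add_of_nonneg_right (hgap i)
    _ = ∑ i, ((if i ∈ S then f i else 0) + c * (t i - if i ∈ S then 1 else 0)) :=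
        sum_congr rfl fun i _ => by split_ifs <;> ring
    _ = ∑ i ∈ S, f i + c * (∑ i, t i - S.card) := by
        rw [sum_add_distrib, ← mul_sum, sum_sub_distrib, sum_ite_mem, univ_inter, sum_boole,
          filter_mem_eq_inter, univ_inter]
    _ = ∑ i ∈ S, f i := by rw [ht, sub_self, mul_zero, add_zero]

lemma sum_mul_le_sk (f t : ι → ℝ) {k : ℕ} (hk : k ≤ Fintype.card ι) (ht0 : ∀ i, 0 ≤ t i)
    (ht1 : ∀ i, t i ≤ 1) (ht : ∑ i, t i = k) :
    ∑ i, f i * t i ≤ sk f k := by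
  obtain ⟨S, rfl, hS⟩ := exists_sum_eq_sk f hk
  obtain ⟨c, hc, hc'⟩ := exists_threshold_of_sum_eq_sk f hS
  exact hS ▸ sum_mul_le_sum_of_threshold f t hc hc' ht0 ht1 ht

end TopSums

section Orthonormal

variable {𝕜 n : Type*} [RCLike 𝕜] [Fintype n] [DecidableEq n] {u : n → n → 𝕜}

lemma sum_star_dotProduct_smul (hu : ∀ i j, star (u i) ⬝ᵥ u j = if i = j then 1 else 0)
    (z : n → 𝕜) : ∑ i, (star (u i) ⬝ᵥ z) • u i = z := by
  set U : Matrix n n 𝕜 := (of u)ᵀ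
  have hU : Uᴴ * U = 1 := by
    ext i j
    simpa [U, mul_apply, dotProduct, one_apply] using hu i j
  calc ∑ i, (star (u i) ⬝ᵥ z) • u i = U *ᵥ (Uᴴ *ᵥ z) := by
        ext a
        simp [U, mulVec, dotProduct, mul_comm]
    _ = z := by rw [mulVec_mulVec, mul_eq_one_comm.1 hU, one_mulVec]

lemma re_star_dotProduct_mulVec_eq_sum (hu : ∀ i j, star (u i) ⬝ᵥ u j = if i = j then 1 else 0)
    {A : Matrix n n 𝕜} {μ : n → ℝ} (heig : ∀ i, A *ᵥ u i = (μ i : 𝕜) • u i) (z : n → 𝕜) :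
    RCLike.re (star z ⬝ᵥ (A *ᵥ z)) = ∑ i, μ i * ‖star (u i) ⬝ᵥ z‖ ^ 2 := by
  have hAz : A *ᵥ z = ∑ i, ((star (u i) ⬝ᵥ z) * μ i) • u i := by
    conv_lhs => rw [← sum_star_dotProduct_smul hu z]
    simp only [mulVec_sum, mulVec_smul, heig, smul_smul]
  rw [hAz, dotProduct_sum, map_sum]
  refine sum_congr rfl fun i _ => ?_
  rw [dotProduct_smul, star_dotProduct, smul_eq_mul, mul_right_comm, RCLike.star_def,
    RCLike.conj_mul, RCLike.norm_conj, ← RCLike.ofReal_pow, ← RCLike.ofReal_mul, RCLike.ofReal_re,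
    mul_comm]

lemma sum_norm_sq_star_dotProduct (hu : ∀ i j, star (u i) ⬝ᵥ u j = if i = j then 1 else 0)
    (z : n → 𝕜) : ∑ i, ‖star (u i) ⬝ᵥ z‖ ^ 2 = RCLike.re (star z ⬝ᵥ z) := by
  simpa using (re_star_dotProduct_mulVec_eq_sum hu (A := 1) (μ := 1) (by simp) z).symm

end Orthonormal

section ProjWeight

variable {𝕜 n : Type*} [RCLike 𝕜] [Fintype n] {v u : n → n → 𝕜}

lemma norm_star_dotProduct_comm (x z : n → 𝕜) : ‖star x ⬝ᵥ z‖ = ‖star z ⬝ᵥ x‖ := by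
  rw [star_dotProduct, norm_star]

lemma re_star_dotProduct_vecMulVec_mulVec (x z : n → 𝕜) :
    RCLike.re (star z ⬝ᵥ (vecMulVec x (star x) *ᵥ z)) = ‖star x ⬝ᵥ z‖ ^ 2 := by
  rw [vecMulVec_mulVec, op_smul_eq_smul, dotProduct_smul, star_dotProduct z x, smul_eq_mul,
    RCLike.star_def, RCLike.mul_conj, ← RCLike.ofReal_pow, RCLike.ofReal_re]

/-- `tr(P_W Π_i)`, where `P_W` projects onto the span of the `u s` with `s ∈ S` and `Π_i` onto
the span of `v i`. -/
noncomputable def projWeight (v u : n → n → 𝕜) (S : Finset n) (i : n) : ℝ :=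
  ∑ s ∈ S, ‖star (v i) ⬝ᵥ u s‖ ^ 2

lemma projWeight_nonneg (S : Finset n) (i : n) : 0 ≤ projWeight v u S i :=
  sum_nonneg fun _ _ => by positivity

lemma sum_projWeight_eq_sum_re (S T : Finset n) :
    ∑ i ∈ T, projWeight v u S i =
      ∑ s ∈ S, RCLike.re (star (u s) ⬝ᵥ ((∑ i ∈ T, vecMulVec (v i) (star (v i))) *ᵥ u s)) := by
  simp only [projWeight, sum_mulVec, dotProduct_sum, map_sum,
    re_star_dotProduct_vecMulVec_mulVec]
  exact sum_comm

variable [DecidableEq n]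

lemma projWeight_le_one (hu : ∀ i j, star (u i) ⬝ᵥ u j = if i = j then 1 else 0)
    (S : Finset n) {i : n} (hv : star (v i) ⬝ᵥ v i = 1) : projWeight v u S i ≤ 1 := by
  calc projWeight v u S i ≤ ∑ s, ‖star (v i) ⬝ᵥ u s‖ ^ 2 :=
        sum_le_sum_of_subset_of_nonneg S.subset_univ fun _ _ _ => by positivity
    _ = 1 := by
        simp_rw [norm_star_dotProduct_comm (v i), sum_norm_sq_star_dotProduct hu, hv,
          RCLike.one_re]

lemma sum_projWeight (hv : ∀ i j, star (v i) ⬝ᵥ v j = if i = j then 1 else 0)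
    (hu : ∀ s, star (u s) ⬝ᵥ u s = 1) (S : Finset n) : ∑ i, projWeight v u S i = S.card := by
  simp only [projWeight]
  rw [sum_comm]
  simp [sum_norm_sq_star_dotProduct hv, hu]

lemma sum_mul_projWeight (hv : ∀ i j, star (v i) ⬝ᵥ v j = if i = j then 1 else 0)
    {A : Matrix n n 𝕜} {μ : n → ℝ} (heig : ∀ i, A *ᵥ v i = (μ i : 𝕜) • v i) (S : Finset n) :
    ∑ i, μ i * projWeight v u S i = ∑ s ∈ S, RCLike.re (star (u s) ⬝ᵥ (A *ᵥ u s)) := by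
  simp only [projWeight, mul_sum, re_star_dotProduct_mulVec_eq_sum hv heig]
  exact sum_comm

end ProjWeight

namespace Matrix.IsHermitian

variable {𝕜 n : Type*} [RCLike 𝕜] [Fintype n] [DecidableEq n] {A : Matrix n n 𝕜}

lemma star_eigenvectorBasis_dotProduct (hA : A.IsHermitian) (i j : n) :
    star ⇑(hA.eigenvectorBasis i) ⬝ᵥ ⇑(hA.eigenvectorBasis j) = if i = j then 1 else 0 := by
  rw [dotProduct_comm, ← EuclideanSpace.inner_eq_star_dotProduct,
    orthonormal_iff_ite.mp hA.eigenvectorBasis.orthonormal]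

lemma mulVec_eigenvectorBasis' (hA : A.IsHermitian) (j : n) :
    A *ᵥ ⇑(hA.eigenvectorBasis j) = (hA.eigenvalues j : 𝕜) • ⇑(hA.eigenvectorBasis j) := by
  rw [mulVec_eigenvectorBasis, RCLike.real_smul_eq_coe_smul (K := 𝕜)]

end Matrix.IsHermitian

theorem stmt17_general {d : ℕ} (k : ℕ) (hkd : k ≤ d)
    (A₁ A₂ : Matrix (Fin d) (Fin d) ℂ) (hA₁ : A₁.IsHermitian) (hA₂ : A₂.IsHermitian)
    (v w : Fin d → Fin d → ℂ)
    (hv : ∀ i j, star (v i) ⬝ᵥ v j = if i = j then 1 else 0)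
    (hw : ∀ i j, star (w i) ⬝ᵥ w j = if i = j then 1 else 0)
    (μ ν : Fin d → ℝ)
    (hveig : ∀ i, A₁ *ᵥ v i = (μ i : ℂ) • v i)
    (hweig : ∀ i, A₂ *ᵥ w i = (ν i : ℂ) • w i)
    (hS : ∀ ℓ₁ ℓ₂ : ℕ, (proj v ℓ₁ + proj w ℓ₂).IsHermitian) :
    ∃ x1 x2 : Fin d → ℝ,
      (∀ i, 0 ≤ x1 i ∧ x1 i ≤ 1 ∧ 0 ≤ x2 i ∧ x2 i ≤ 1) ∧
      (∑ i, x1 i = k) ∧ (∑ i, x2 i = k) ∧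
      (∀ ℓ₁, 1 ≤ ℓ₁ → ℓ₁ ≤ d → ∀ ℓ₂, 1 ≤ ℓ₂ → ℓ₂ ≤ d →
        ∑ i ∈ Finset.univ.filter (fun i : Fin d => (i : ℕ) < ℓ₁), x1 i
          + ∑ i ∈ Finset.univ.filter (fun i : Fin d => (i : ℕ) < ℓ₂), x2 i
        ≤ sk (hS ℓ₁ ℓ₂).eigenvalues k) ∧
      sk (hA₁.add hA₂).eigenvalues k ≤ ∑ i, μ i * x1 i + ∑ i, ν i * x2 i := by
  set hC := hA₁.add hA₂
  set u : Fin d → Fin d → ℂ := fun s => ⇑(hC.eigenvectorBasis s)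
  have hu := hC.star_eigenvectorBasis_dotProduct
  have hunit (s : Fin d) : star (u s) ⬝ᵥ u s = 1 := by simpa using hu s s
  have hkcard : k ≤ Fintype.card (Fin d) := by simpa using hkd
  obtain ⟨S, hSk, hStop⟩ := exists_sum_eq_sk hC.eigenvalues hkcard
  refine ⟨projWeight v u S, projWeight w u S, fun i => ⟨projWeight_nonneg S i,
    projWeight_le_one hu S (by simpa using hv i i), projWeight_nonneg S i,
    projWeight_le_one hu S (by simpa using hw i i)⟩, by rw [sum_projWeight hv hunit, hSk],
    by rw [sum_projWeight hw hunit, hSk], fun ℓ₁ _ _ ℓ₂ _ _ => ?_, ?_⟩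
  · set hM := hS ℓ₁ ℓ₂
    set f : Fin d → Fin d → ℂ := fun j => ⇑(hM.eigenvectorBasis j)
    have hf := hM.star_eigenvectorBasis_dotProduct
    calc _ = ∑ s ∈ S, RCLike.re (star (u s) ⬝ᵥ ((proj v ℓ₁ + proj w ℓ₂) *ᵥ u s)) := by
          simp only [proj, sum_projWeight_eq_sum_re, ← sum_add_distrib, add_mulVec,
            dotProduct_add, map_add]
      _ = ∑ j, hM.eigenvalues j * projWeight f u S j :=
          (sum_mul_projWeight hf hM.mulVec_eigenvectorBasis' S).symm
      _ ≤ sk hM.eigenvalues k :=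
          sum_mul_le_sk _ _ hkcard (projWeight_nonneg S)
            (fun j => projWeight_le_one hu S (by simpa using hf j j))
            (by rw [sum_projWeight hf hunit, hSk])
  · apply le_of_eq
    calc sk hC.eigenvalues k = ∑ s ∈ S, hC.eigenvalues s := hStop.symm
      _ = ∑ s ∈ S, RCLike.re (star (u s) ⬝ᵥ ((A₁ + A₂) *ᵥ u s)) :=
          sum_congr rfl fun s _ => hC.eigenvalues_eq s
      _ = ∑ i, μ i * projWeight v u S i + ∑ i, ν i * projWeight w u S i := by
          rw [sum_mul_projWeight hv hveig, sum_mul_projWeight hw hweig, ← sum_add_distrib]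
          simp only [add_mulVec, dotProduct_add, map_add]

/-- Linear programming refinement of Ky Fan's majorization relation:
`s_k(A₁ + A₂)` is at most the optimal value of the LP with basic and alignment constraints;
equivalently, there is a feasible point whose objective value dominates `s_k(A₁ + A₂)`. -/
theorem stmt17 {d : ℕ} (k : ℕ) (hk1 : 1 ≤ k) (hkd : k ≤ d)
    (A₁ A₂ : Matrix (Fin d) (Fin d) ℂ) (hA₁ : A₁.IsHermitian) (hA₂ : A₂.IsHermitian)
    (v w : Fin d → Fin d → ℂ)
    (hv : ∀ i j, star (v i) ⬝ᵥ v j = if i = j then 1 else 0)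
    (hw : ∀ i j, star (w i) ⬝ᵥ w j = if i = j then 1 else 0)
    (μ ν : Fin d → ℝ) (hμ : Antitone μ) (hν : Antitone ν)
    (hveig : ∀ i, A₁ *ᵥ v i = (μ i : ℂ) • v i)
    (hweig : ∀ i, A₂ *ᵥ w i = (ν i : ℂ) • w i)
    (hS : ∀ ℓ₁ ℓ₂ : ℕ, (proj v ℓ₁ + proj w ℓ₂).IsHermitian) :
    ∃ x1 x2 : Fin d → ℝ,
      (∀ i, 0 ≤ x1 i ∧ x1 i ≤ 1 ∧ 0 ≤ x2 i ∧ x2 i ≤ 1) ∧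
      (∑ i, x1 i = k) ∧ (∑ i, x2 i = k) ∧
      (∀ ℓ₁, 1 ≤ ℓ₁ → ℓ₁ ≤ d → ∀ ℓ₂, 1 ≤ ℓ₂ → ℓ₂ ≤ d →
        ∑ i ∈ Finset.univ.filter (fun i : Fin d => (i : ℕ) < ℓ₁), x1 i
          + ∑ i ∈ Finset.univ.filter (fun i : Fin d => (i : ℕ) < ℓ₂), x2 i
        ≤ sk (hS ℓ₁ ℓ₂).eigenvalues k) ∧
      sk (hA₁.add hA₂).eigenvalues k ≤ ∑ i, μ i * x1 i + ∑ i, ν i * x2 i :=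
  stmt17_general k hkd A₁ A₂ hA₁ hA₂ v w hv hw μ ν hveig hweig hS
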